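/- On the cubic graph G with House of Graphs ID #44172, the configuration C of size 12 given by C(5) = 7, C(11) = 1, C(12) = 1, C(10) = 1, C(7) = 1, C(6) = 1, and C(v) = 0 for all other vertices v, is 1-unsolvable (i.e., unsolvable for the target vertex labeled 1). Consequently π(G) > 12 and G is not Class 0. -/

import Mathlib

/-- A pebbling move on the graph `G`: remove two pebbles from a vertex `u`
(which has at least two pebbles) and add one pebble to a neighbor `v` of `u`. -/
def PebblingMove {V : Type} [DecidableEq V] (G : SimpleGraph V) (C C' : V → ℕ) : Prop :=
  ∃ u v, G.Adj u v ∧ 2 ≤ C u ∧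
    C' = fun w => if w = u then C u - 2 else if w = v then C v + 1 else C w

/-- A configuration `C` is `r`-solvable if some (possibly empty) sequence of
pebbling moves starting from `C` produces a configuration with at least one
pebble on `r`. -/
def PebblingSolvable {V : Type} [DecidableEq V] (G : SimpleGraph V) (C : V → ℕ) (r : V) : Prop :=
  ∃ C' : V → ℕ, Relation.ReflTransGen (PebblingMove G) C C' ∧ 1 ≤ C' r

/-- The pebbling number of `G`: the least `t` such that for every target
vertex `r`, every configuration of size `t` is `r`-solvable. -/
noncomputable def pebblingNumber {V : Type} [DecidableEq V] [Fintype V] (G : SimpleGraph V) : ℕ :=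
  sInf {t : ℕ | ∀ (r : V) (C : V → ℕ), (∑ v, C v) = t → PebblingSolvable G C r}

/-- The cubic graph with House of Graphs ID #44172.
Vertex labeled `k` (for `k ∈ {1, …, 12}`) is represented by `(k : Fin 12)`
(so vertex `12` is `(12 : Fin 12) = 0`; this labeling is injective). -/
def hog44172 : SimpleGraph (Fin 12) := SimpleGraph.fromEdgeSet
  ({s(1, 4), s(1, 3), s(1, 2), s(4, 9), s(4, 8), s(3, 11), s(3, 12), s(2, 12), s(9, 8), s(2, 10), s(9, 5), s(11, 7), s(10, 6), s(5, 7), s(11, 6), s(10, 7), s(8, 12), s(5, 6)} : Set (Sym2 (Fin 12)))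

/-!
A pebbling move removes one pebble from the board, so from a configuration of `t` pebbles at
most `t` moves can be made and only finitely many configurations are reachable. Encoding
configurations of fewer than `b` pebbles on `Fin n` by their base-`b` digits, the reachable ones
can be enumerated layer by layer; for the configuration of the theorem and `b = 13` none of the
483 of them has a pebble on vertex 1.

On a connected graph on `V`, a configuration of `|V| * 2 ^ |V|` pebbles has `2 ^ |V|` of them on
one vertex, enough to move a pebble along a path to any target; so the set defining
`pebblingNumber` is nonempty and its infimum belongs to it. Below the unsolvable configuration
lies a configuration of every smaller size, unsolvable as well, so the pebbling number exceeds 12.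
-/

lemma exists_le_sum_eq {ι : Type*} [Fintype ι] [DecidableEq ι] (C : ι → ℕ) {t : ℕ}
    (ht : t ≤ ∑ i, C i) : ∃ D ≤ C, ∑ i, D i = t := by
  induction t with
  | zero => exact ⟨0, fun i => Nat.zero_le _, by simp⟩
  | succ t ih =>
    obtain ⟨D, hDC, hD⟩ := ih (by omega)
    obtain ⟨i, -, hi⟩ := Finset.exists_lt_of_sum_lt (s := Finset.univ) (f := D) (g := C) (by omega)
    refine ⟨D + Pi.single i 1, fun j => ?_, by simp [Finset.sum_add_distrib, hD]⟩
    by_cases hj : j = i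
    · subst hj
      simpa using hi
    · simpa [hj] using hDC j

section Moves

variable {V : Type} [DecidableEq V] {G : SimpleGraph V}

def movedConfig (C : V → ℕ) (u v : V) : V → ℕ :=
  fun w => if w = u then C u - 2 else if w = v then C v + 1 else C w

lemma pebblingMove_movedConfig {C : V → ℕ} {u v : V} (h : G.Adj u v) (hu : 2 ≤ C u) :
    PebblingMove G C (movedConfig C u v) :=
  ⟨u, v, h, hu, rfl⟩

lemma PebblingMove.exists_of_le {C C' D : V → ℕ} (h : PebblingMove G C C') (hCD : C ≤ D) :
    ∃ D', PebblingMove G D D' ∧ C' ≤ D' := by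
  obtain ⟨u, v, huv, hu, rfl⟩ := h
  refine ⟨movedConfig D u v, pebblingMove_movedConfig huv (hu.trans (hCD u)), fun w => ?_⟩
  have h₁ : C u ≤ D u := hCD u
  have h₂ : C v ≤ D v := hCD v
  have h₃ : C w ≤ D w := hCD w
  simp only [movedConfig]
  split_ifs <;> subst_vars <;> omega

lemma PebblingSolvable.mono {C D : V → ℕ} {r : V} (hCD : C ≤ D) (h : PebblingSolvable G C r) :
    PebblingSolvable G D r := by
  obtain ⟨C', hCC', hr⟩ := h
  suffices ∃ D', Relation.ReflTransGen (PebblingMove G) D D' ∧ C' ≤ D' by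
    obtain ⟨D', hDD', hle⟩ := this
    exact ⟨D', hDD', hr.trans (hle r)⟩
  clear hr
  induction hCC' with
  | refl => exact ⟨D, .refl, hCD⟩
  | tail _ hmove ih =>
    obtain ⟨D₁, hDD₁, hle⟩ := ih
    obtain ⟨D₂, hmove', hle'⟩ := hmove.exists_of_le hle
    exact ⟨D₂, hDD₁.tail hmove', hle'⟩

lemma not_pebblingSolvable_of_invariant (P : (V → ℕ) → Prop)
    (hmove : ∀ C C', P C → PebblingMove G C C' → P C') {r : V} (htarget : ∀ C, P C → C r = 0)
    {C : V → ℕ} (hC : P C) : ¬ PebblingSolvable G C r := by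
  rintro ⟨C', hCC', hr⟩
  have hP : P C' := by
    clear hr
    induction hCC' with
    | refl => exact hC
    | tail _ hstep ih => exact hmove _ _ ih hstep
  have := htarget C' hP
  omega

lemma exists_reflTransGen_add_le_of_adj {u v : V} (h : G.Adj u v) :
    ∀ (m : ℕ) (C : V → ℕ), 2 * m ≤ C u →
      ∃ C', Relation.ReflTransGen (PebblingMove G) C C' ∧ C v + m ≤ C' v
  | 0, C, _ => ⟨C, .refl, le_rfl⟩
  | m + 1, C, hC => by
    obtain ⟨C', hC', hv⟩ :=
      exists_reflTransGen_add_le_of_adj h m (movedConfig C u v) (by simp [movedConfig]; omega)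
    refine ⟨C', .head (pebblingMove_movedConfig h (by omega)) hC', ?_⟩
    simp only [movedConfig, if_neg h.ne.symm, if_true] at hv
    omega

lemma exists_reflTransGen_le_of_walk {u r : V} (p : G.Walk u r) (m : ℕ) {C : V → ℕ}
    (hC : 2 ^ p.length * m ≤ C u) :
    ∃ C', Relation.ReflTransGen (PebblingMove G) C C' ∧ m ≤ C' r := by
  induction p generalizing C with
  | nil => exact ⟨C, .refl, by simpa using hC⟩
  | cons h p ih =>
    rw [SimpleGraph.Walk.length_cons, pow_succ, mul_right_comm, mul_comm] at hC
    obtain ⟨C₁, hCC₁, h₁⟩ := exists_reflTransGen_add_le_of_adj h _ C hC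
    obtain ⟨C₂, hC₁C₂, h₂⟩ := ih (C := C₁) (by omega)
    exact ⟨C₂, hCC₁.trans hC₁C₂, h₂⟩

variable [Fintype V]

lemma sum_movedConfig_mul_add (f : V → ℕ) {C : V → ℕ} {u v : V} (huv : u ≠ v) (hu : 2 ≤ C u) :
    ∑ w, movedConfig C u v w * f w + 2 * f u = ∑ w, C w * f w + f v := by
  have key : ∀ w, movedConfig C u v w * f w + (if w = u then 2 * f u else 0) =
      C w * f w + (if w = v then f v else 0) := by
    intro w
    by_cases hwu : w = u
    · subst hwu
      simp only [movedConfig, if_true, if_neg huv, ← add_mul, Nat.sub_add_cancel hu, add_zero]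
    · by_cases hwv : w = v
      · subst hwv
        simp [movedConfig, hwu, add_mul]
      · simp [movedConfig, hwu, hwv]
  simpa [Finset.sum_add_distrib, Finset.sum_ite_eq'] using
    Finset.sum_congr (s₁ := Finset.univ) rfl fun w _ => key w

lemma PebblingMove.sum_lt {C C' : V → ℕ} (h : PebblingMove G C C') : ∑ v, C' v < ∑ v, C v := by
  obtain ⟨u, v, huv, hu, rfl⟩ := h
  have := sum_movedConfig_mul_add (fun _ => 1) huv.ne hu
  simp only [mul_one] at this
  change ∑ w, movedConfig C u v w < _
  omega

lemma pebblingSolvable_of_connected (hG : G.Connected) {C : V → ℕ}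
    (hC : Fintype.card V * 2 ^ Fintype.card V ≤ ∑ v, C v) (r : V) : PebblingSolvable G C r := by
  obtain ⟨u, -, hu⟩ : ∃ u ∈ Finset.univ, 2 ^ Fintype.card V ≤ C u :=
    Finset.exists_le_of_sum_le ⟨r, Finset.mem_univ r⟩ (by simpa using hC)
  obtain ⟨p, hp⟩ := (hG.preconnected u r).exists_isPath
  exact exists_reflTransGen_le_of_walk p 1 <| by
    simpa using (Nat.pow_le_pow_right two_pos hp.length_lt.le).trans hu

theorem lt_pebblingNumber_of_not_pebblingSolvable (hG : G.Connected) {C : V → ℕ} {r : V}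
    (hC : ¬ PebblingSolvable G C r) {t : ℕ} (ht : ∑ v, C v = t) : t < pebblingNumber G := by
  have hne : {t : ℕ | ∀ (r : V) (C : V → ℕ), (∑ v, C v) = t → PebblingSolvable G C r}.Nonempty :=
    ⟨_, fun r _ hC => pebblingSolvable_of_connected hG hC.ge r⟩
  by_contra! h
  obtain ⟨D, hDC, hD⟩ := exists_le_sum_eq C (ht ▸ h)
  exact hC ((Nat.sInf_mem hne r D hD).mono hDC)

end Moves

section Codes

variable {n : ℕ}

def configCode (b : ℕ) (C : Fin n → ℕ) : ℕ := Nat.ofDigits b (List.ofFn C)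

lemma configCode_eq_sum (b : ℕ) (C : Fin n → ℕ) : configCode b C = ∑ i, C i * b ^ (i : ℕ) := by
  simp [configCode, Nat.ofDigits_eq_sum_mapIdx, List.mapIdx_eq_ofFn, List.sum_ofFn]

lemma configCode_div_pow_mod {b : ℕ} {C : Fin n → ℕ} (hC : ∀ i, C i < b) (u : Fin n) :
    configCode b C / b ^ (u : ℕ) % b = C u := by
  rw [configCode, Nat.ofDigits_div_pow_eq_ofDigits_drop _ ((Nat.zero_le _).trans_lt (hC u)) _
    (by simpa [List.mem_ofFn] using hC), Nat.ofDigits_mod_eq_head!,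
    List.drop_eq_getElem_cons (by simp), List.head!_cons, List.getElem_ofFn,
    Nat.mod_eq_of_lt (hC u)]

lemma configCode_movedConfig (b : ℕ) {C : Fin n → ℕ} {u v : Fin n} (huv : u ≠ v) (hu : 2 ≤ C u) :
    configCode b (movedConfig C u v) + 2 * b ^ (u : ℕ) = configCode b C + b ^ (v : ℕ) := by
  simpa only [configCode_eq_sum] using sum_movedConfig_mul_add (fun i : Fin n => b ^ (i : ℕ)) huv hu

end Codes

section Search

variable {n : ℕ} (G : SimpleGraph (Fin n)) [DecidableRel G.Adj] (b : ℕ)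

-- A separate constant, so that the kernel can cache the adjacency list during the search.
def adjPairs : List (Fin n × Fin n) :=
  (List.finRange n ×ˢ List.finRange n).filter fun p => G.Adj p.1 p.2

def successorCodes (c : ℕ) : List ℕ :=
  ((adjPairs G).filter fun p => 2 ≤ c / b ^ (p.1 : ℕ) % b).map
    fun p => c + b ^ (p.2 : ℕ) - 2 * b ^ (p.1 : ℕ)

def nextCodes (L : List ℕ) : List ℕ :=
  L.foldr (fun c acc => successorCodes G b c ∪ acc) []

/-- `p` holds on each of the first `fuel` layers of codes reachable from `L`, and the layer
after them is empty. -/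
def forallReachableCodes (p : ℕ → Bool) : ℕ → List ℕ → Bool
  | 0, L => L.isEmpty
  | fuel + 1, L => L.all p && forallReachableCodes p fuel (nextCodes G b L)

variable {G b}

lemma mem_nextCodes {C C' : Fin n → ℕ} (hC : ∀ i, C i < b) (h : PebblingMove G C C')
    {L : List ℕ} (hL : configCode b C ∈ L) : configCode b C' ∈ nextCodes G b L := by
  obtain ⟨u, v, huv, hu, rfl⟩ := h
  have hsucc : configCode b (movedConfig C u v) ∈ successorCodes G b (configCode b C) := by
    refine List.mem_map.2 ⟨(u, v), List.mem_filter.2 ⟨?_, ?_⟩, ?_⟩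
    · simp [adjPairs, huv]
    · simpa [configCode_div_pow_mod hC] using hu
    · show configCode b C + b ^ (v : ℕ) - 2 * b ^ (u : ℕ) = _
      have := configCode_movedConfig b huv.ne hu
      omega
  induction L with
  | nil => simp at hL
  | cons c L ih =>
    rcases List.mem_cons.1 hL with rfl | hL
    · exact List.mem_union_left hsucc _
    · exact List.mem_union_right _ (ih hL)

theorem not_pebblingSolvable_of_forallReachableCodes {C : Fin n → ℕ} {r : Fin n} {fuel : ℕ}
    (hC : ∑ i, C i < b)
    (h : forallReachableCodes G b (fun c => c / b ^ (r : ℕ) % b == 0) fuel [configCode b C]) :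
    ¬ PebblingSolvable G C r := by
  have digit_lt {D : Fin n → ℕ} (hD : ∑ i, D i < b) (i : Fin n) : D i < b :=
    (Finset.single_le_sum (fun _ _ => Nat.zero_le _) (Finset.mem_univ i)).trans_lt hD
  refine not_pebblingSolvable_of_invariant (fun D => ∑ i, D i < b ∧ ∃ fuel L,
      forallReachableCodes G b (fun c => c / b ^ (r : ℕ) % b == 0) fuel L ∧ configCode b D ∈ L)
    ?_ ?_ ⟨hC, fuel, _, h, List.mem_singleton_self _⟩
  · rintro D D' ⟨hD, fuel, L, hL, hmem⟩ hmove
    cases fuel with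
    | zero => simp_all [forallReachableCodes]
    | succ fuel =>
      simp only [forallReachableCodes, Bool.and_eq_true] at hL
      exact ⟨hmove.sum_lt.trans hD, fuel, _, hL.2, mem_nextCodes (digit_lt hD) hmove hmem⟩
  · rintro D ⟨hD, fuel, L, hL, hmem⟩
    cases fuel with
    | zero => simp_all [forallReachableCodes]
    | succ fuel =>
      simp only [forallReachableCodes, Bool.and_eq_true, List.all_eq_true] at hL
      simpa [configCode_div_pow_mod (digit_lt hD)] using hL.1 _ hmem

end Search

instance : DecidableRel hog44172.Adj := by
  unfold hog44172
  infer_instance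

lemma hog44172_isHamiltonian : hog44172.IsHamiltonian := fun _ =>
  ⟨1, .cons (v := 4) (by decide) <| .cons (v := 9) (by decide) <| .cons (v := 8) (by decide) <|
    .cons (v := 12) (by decide) <| .cons (v := 2) (by decide) <| .cons (v := 10) (by decide) <|
    .cons (v := 6) (by decide) <| .cons (v := 5) (by decide) <| .cons (v := 7) (by decide) <|
    .cons (v := 11) (by decide) <| .cons (v := 3) (by decide) <| .cons (v := 1) (by decide) .nil, by
    rw [SimpleGraph.Walk.isHamiltonianCycle_iff_isCycle_and_support_count_tail_eq_one,
      SimpleGraph.Walk.isCycle_def, SimpleGraph.Walk.isTrail_def]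
    decide⟩

/-- The size-12 configuration with 7 pebbles on vertex 5 and 1 pebble on each
of vertices 11, 12, 10, 7, 6 is unsolvable for target vertex 1; hence the
pebbling number of graph #44172 exceeds 12 and the graph is not Class 0. -/
theorem hog44172_not_class0 :
    ¬ PebblingSolvable hog44172
        (fun v => if v = 5 then 7 else if v = 11 then 1 else if v = 12 then 1 else
          if v = 10 then 1 else if v = 7 then 1 else if v = 6 then 1 else 0) 1 ∧
    12 < pebblingNumber hog44172 ∧
    pebblingNumber hog44172 ≠ Fintype.card (Fin 12) := by
  refine (fun hunsolvable => ⟨hunsolvable, ?_⟩) <|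
    not_pebblingSolvable_of_forallReachableCodes (b := 13) (fuel := 13) (by decide)
      (by decide +kernel)
  have hlt := lt_pebblingNumber_of_not_pebblingSolvable hog44172_isHamiltonian.connected
    hunsolvable (t := 12) (by decide)
  exact ⟨hlt, by simp only [Fintype.card_fin]; omega⟩
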